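/- Let V be a nondegenerate quadratic E-space of dimension 2m with Witt index r, containing a maximal isotropic E-subspace with basis e₁,…,e_r and dual basis e₁',…,e_r'. With L_k := (E e₁ ⊕ ⋯ ⊕ E e_k) ⊕ τ V_{2m−2k,F} as in the paper, the stabilizer of L_k in O(V) equals (GL(X_k) × O(V_{2m−2k,F})) ⋉ N, where X_k = E e₁ ⊕ ⋯ ⊕ E e_k, N is the unipotent radical of the parabolic Stab_{O(V)}(X_k), and V_{2m−2k,F} is the indicated F-rational subspace. -/

import Mathlib

/-!
Put `W = E·V_F`, so that `V = X ⊕ W ⊕ Y` is a Witt decomposition. The `F`-span of `L_k` is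
`X ⊕ τ V_F` and its `q`-radical is `X`, so an isometry `g` stabilizing `L_k` stabilizes `X`, hence
also `X^⊥ = X ⊕ W`. Its block-diagonal part `m` (the blocks `g|_X`, `pr_W ∘ g|_W`, `pr_Y ∘ g|_Y`)
is again an isometry; it preserves `X`, `W`, `Y`, and `V_F` because `g (τ V_F) ⊆ X ⊕ τ V_F`.
The quotient `u = m⁻¹ g` fixes `X` and moves `X^⊥` only inside `X`, i.e. lies in `N`. Conversely,
Levi elements and elements of `N` visibly preserve `X ⊕ τ V_F`, and so do their inverses (for the
Levi part by finite dimensionality over `F`).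
-/

open Set

open scoped Pointwise

lemma LinearEquiv.mapsTo_symm {K V : Type*} [DivisionRing K] [AddCommGroup V] [Module K V]
    {p : Submodule K V} [FiniteDimensional K p] (e : V ≃ₗ[K] V) (h : MapsTo e p p) :
    MapsTo e.symm p p := by
  intro x hx
  obtain ⟨y, hy, rfl⟩ :=
    (LinearMap.injOn_iff_surjOn (f := e.toLinearMap) h).mp e.injective.injOn hx
  simpa using hy

namespace LinearMap.IsOrthogonal

variable {E V : Type*} [Field E] [AddCommGroup V] [Module E V] {q : LinearMap.BilinForm E V}

lemma injective (hnd : q.SeparatingLeft) {f : V →ₗ[E] V} (hf : q.IsOrthogonal f) :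
    Function.Injective f :=
  (injective_iff_map_eq_zero f).mpr fun a ha => hnd a fun t => by
    rw [← hf, ha, map_zero, LinearMap.zero_apply]

lemma symm {g : V ≃ₗ[E] V} (hg : q.IsOrthogonal g) : q.IsOrthogonal g.symm :=
  fun a b => by rw [← hg, g.apply_symm_apply, g.apply_symm_apply]

lemma mapsTo_radical {g : V ≃ₗ[E] V} (hg : q.IsOrthogonal g) {S : Set V}
    (hS : MapsTo g S S) (hS' : MapsTo g.symm S S) :
    MapsTo g {x | x ∈ S ∧ ∀ y ∈ S, q x y = 0} {x | x ∈ S ∧ ∀ y ∈ S, q x y = 0} :=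
  fun x ⟨hx, hxS⟩ => ⟨hS hx, fun y hy => by
    rw [← g.apply_symm_apply y, hg]; exact hxS _ (hS' hy)⟩

lemma symm_apply_sub_mem {X : Submodule E V} {u : V ≃ₗ[E] V} (hu : q.IsOrthogonal u)
    (huX : ∀ x ∈ X, u x = x) (huN : ∀ w, (∀ x ∈ X, q w x = 0) → u w - w ∈ X) {w : V}
    (hw : ∀ x ∈ X, q w x = 0) : u.symm w - w ∈ X := by
  have : ∀ x ∈ X, q (u.symm w) x = 0 := fun x hx => by
    rw [← hu, u.apply_symm_apply, huX x hx]; exact hw x hx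
  simpa using X.neg_mem (huN _ this)

end LinearMap.IsOrthogonal

namespace LinearMap.BilinForm

variable {E V : Type*} [Field E] [AddCommGroup V] [Module E V] {q : LinearMap.BilinForm E V}

lemma apply_eq_zero_of_mem_span {x : V} {s : Set V} (h : ∀ v ∈ s, q x v = 0) :
    ∀ w ∈ Submodule.span E s, q x w = 0 :=
  fun _ hw => (Submodule.span_le (p := LinearMap.ker (q x))).mpr h hw

lemma eq_zero_of_forall_mem_sup (hnd : q.SeparatingLeft) {X W Y : Submodule E V}
    (htop : X ⊔ W ⊔ Y = ⊤) {a : V} (hX : ∀ x ∈ X, q a x = 0) (hW : ∀ w ∈ W, q a w = 0)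
    (hY : ∀ y ∈ Y, q a y = 0) : a = 0 := by
  have : X ⊔ W ⊔ Y ≤ LinearMap.ker (q a) := sup_le (sup_le hX hW) hY
  exact hnd a fun t => this (htop ▸ Submodule.mem_top)

lemma isCompl_sup_of_sup_eq_top (hsymm : q.IsSymm) (hnd : q.SeparatingLeft)
    {X W Y : Submodule E V} (hX : ∀ x ∈ X, ∀ x' ∈ X, q x x' = 0)
    (hY : ∀ y ∈ Y, ∀ y' ∈ Y, q y y' = 0) (hXW : ∀ x ∈ X, ∀ w ∈ W, q x w = 0)
    (hYW : ∀ y ∈ Y, ∀ w ∈ W, q y w = 0) (htop : X ⊔ W ⊔ Y = ⊤) : IsCompl X (W ⊔ Y) := by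
  refine ⟨Submodule.disjoint_def.mpr fun z hzX hz => ?_,
    codisjoint_iff.mpr (by rw [← sup_assoc, htop])⟩
  obtain ⟨w, hw, y, hy, rfl⟩ := Submodule.mem_sup.mp hz
  have hwX : ∀ x ∈ X, q w x = 0 := fun x hx => by rw [hsymm.eq]; exact hXW x hx w hw
  obtain rfl : y = 0 := eq_zero_of_forall_mem_sup hnd htop
    (fun x hx => by simpa [hwX x hx] using hX _ hzX x hx) (hYW y hy) (hY y hy)
  rw [add_zero] at hzX ⊢
  exact eq_zero_of_forall_mem_sup hnd htop hwX (hXW w hzX)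
    fun y hy => by rw [hsymm.eq]; exact hYW y hy w hw

structure IsWittDecomposition (q : LinearMap.BilinForm E V) (X W Y : Submodule E V) : Prop where
  isotropic_X : ∀ x ∈ X, ∀ x' ∈ X, q x x' = 0
  isotropic_Y : ∀ y ∈ Y, ∀ y' ∈ Y, q y y' = 0
  ortho_XW : ∀ x ∈ X, ∀ w ∈ W, q x w = 0
  ortho_YW : ∀ y ∈ Y, ∀ w ∈ W, q y w = 0
  isCompl_X : IsCompl X (W ⊔ Y)
  isCompl_Y : IsCompl Y (X ⊔ W)

lemma IsWittDecomposition.of_sup_eq_top (hsymm : q.IsSymm) (hnd : q.SeparatingLeft)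
    {X W Y : Submodule E V} (hX : ∀ x ∈ X, ∀ x' ∈ X, q x x' = 0)
    (hY : ∀ y ∈ Y, ∀ y' ∈ Y, q y y' = 0) (hXW : ∀ x ∈ X, ∀ w ∈ W, q x w = 0)
    (hYW : ∀ y ∈ Y, ∀ w ∈ W, q y w = 0) (htop : X ⊔ W ⊔ Y = ⊤) :
    q.IsWittDecomposition X W Y where
  isotropic_X := hX
  isotropic_Y := hY
  ortho_XW := hXW
  ortho_YW := hYW
  isCompl_X := isCompl_sup_of_sup_eq_top hsymm hnd hX hY hXW hYW htop
  isCompl_Y := sup_comm X W ▸ isCompl_sup_of_sup_eq_top hsymm hnd hY hX hYW hXW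
    (by rw [← htop]; ac_rfl)

namespace IsWittDecomposition

variable {X W Y : Submodule E V}

lemma sup_eq_top (hD : q.IsWittDecomposition X W Y) : X ⊔ W ⊔ Y = ⊤ := by
  rw [sup_assoc]; exact hD.isCompl_X.sup_eq_top

lemma apply_add_add (hD : q.IsWittDecomposition X W Y) (hsymm : q.IsSymm) {x w y x' w' y' : V}
    (hx : x ∈ X) (hw : w ∈ W) (hy : y ∈ Y) (hx' : x' ∈ X) (hw' : w' ∈ W) (hy' : y' ∈ Y) :
    q (x + w + y) (x' + w' + y') = q x y' + q w w' + q y x' := by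
  simp only [map_add, LinearMap.add_apply, hD.isotropic_X x hx x' hx', hD.isotropic_Y y hy y' hy',
    hD.ortho_XW x hx w' hw', hD.ortho_YW y hy w' hw', hsymm.eq w x', hsymm.eq w y',
    hD.ortho_XW x' hx' w hw, hD.ortho_YW y' hy' w hw]
  ring

variable (hD : q.IsWittDecomposition X W Y)

noncomputable def projX : V →ₗ[E] V := X.projection _ hD.isCompl_X

noncomputable def projY : V →ₗ[E] V := Y.projection _ hD.isCompl_Y

noncomputable def projW : V →ₗ[E] V := LinearMap.id - hD.projX - hD.projY

variable {x w y : V}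

lemma projX_apply_of_mem (hx : x ∈ X) : hD.projX x = x :=
  Submodule.projection_apply_of_mem_left _ hx

lemma projX_add_add (hx : x ∈ X) (hw : w ∈ W) (hy : y ∈ Y) : hD.projX (x + w + y) = x := by
  rw [add_assoc, map_add, hD.projX_apply_of_mem hx, projX,
    Submodule.projection_apply_of_mem_right _ (Submodule.add_mem_sup hw hy), add_zero]

lemma projY_add_add (hx : x ∈ X) (hw : w ∈ W) (hy : y ∈ Y) : hD.projY (x + w + y) = y := by
  rw [projY, map_add, Submodule.projection_apply_of_mem_left _ hy,
    Submodule.projection_apply_of_mem_right _ (Submodule.add_mem_sup hx hw), zero_add]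

lemma projW_add_add (hx : x ∈ X) (hw : w ∈ W) (hy : y ∈ Y) : hD.projW (x + w + y) = w := by
  rw [projW, LinearMap.sub_apply, LinearMap.sub_apply, hD.projX_add_add hx hw hy,
    hD.projY_add_add hx hw hy, LinearMap.id_apply]
  abel

lemma projX_add_projW_add_projY (v : V) : hD.projX v + hD.projW v + hD.projY v = v := by
  simp only [projW, LinearMap.sub_apply, LinearMap.id_apply]
  abel

lemma projX_mem (v : V) : hD.projX v ∈ X := Submodule.projection_apply_mem _ v

lemma projY_mem (v : V) : hD.projY v ∈ Y := Submodule.projection_apply_mem _ v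

lemma projW_mem (v : V) : hD.projW v ∈ W := by
  have hv : v ∈ X ⊔ W ⊔ Y := hD.sup_eq_top ▸ Submodule.mem_top
  obtain ⟨_, hxw, y, hy, rfl⟩ := Submodule.mem_sup.mp hv
  obtain ⟨x, hx, w, hw, rfl⟩ := Submodule.mem_sup.mp hxw
  rwa [hD.projW_add_add hx hw hy]

lemma apply_eq (hsymm : q.IsSymm) (a b : V) :
    q a b = q (hD.projX a) (hD.projY b) + q (hD.projW a) (hD.projW b) +
      q (hD.projY a) (hD.projX b) := by
  conv_lhs => rw [← hD.projX_add_projW_add_projY a, ← hD.projX_add_projW_add_projY b]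
  exact hD.apply_add_add hsymm (hD.projX_mem a) (hD.projW_mem a) (hD.projY_mem a)
    (hD.projX_mem b) (hD.projW_mem b) (hD.projY_mem b)

lemma apply_eq_apply_projY (hsymm : q.IsSymm) (hx : x ∈ X) (v : V) :
    q x v = q x (hD.projY v) := by
  have := hD.apply_add_add hsymm hx W.zero_mem Y.zero_mem (hD.projX_mem v) (hD.projW_mem v)
    (hD.projY_mem v)
  simpa [hD.projX_add_projW_add_projY] using this

lemma apply_eq_apply_projW (hsymm : q.IsSymm) {a b : V} (ha : hD.projY a = 0)
    (hb : hD.projY b = 0) : q a b = q (hD.projW a) (hD.projW b) := by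
  simp [hD.apply_eq hsymm a b, ha, hb]

lemma projY_eq_zero_of_orthogonal_X (hsymm : q.IsSymm) (hnd : q.SeparatingLeft) {a : V}
    (ha : ∀ x ∈ X, q a x = 0) : hD.projY a = 0 :=
  eq_zero_of_forall_mem_sup hnd hD.sup_eq_top
    (fun x hx => by rw [hsymm.eq, ← hD.apply_eq_apply_projY hsymm hx, hsymm.eq]; exact ha x hx)
    (hD.ortho_YW _ (hD.projY_mem a)) (hD.isotropic_Y _ (hD.projY_mem a))

noncomputable def blockDiag (f : V →ₗ[E] V) : V →ₗ[E] V :=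
  hD.projX ∘ₗ f ∘ₗ hD.projX + hD.projW ∘ₗ f ∘ₗ hD.projW + hD.projY ∘ₗ f ∘ₗ hD.projY

lemma blockDiag_apply (f : V →ₗ[E] V) (v : V) :
    hD.blockDiag f v = hD.projX (f (hD.projX v)) + hD.projW (f (hD.projW v)) +
      hD.projY (f (hD.projY v)) := rfl

lemma blockDiag_add_add (f : V →ₗ[E] V) (hx : x ∈ X) (hw : w ∈ W) (hy : y ∈ Y) :
    hD.blockDiag f (x + w + y) = hD.projX (f x) + hD.projW (f w) + hD.projY (f y) := by
  rw [blockDiag_apply, hD.projX_add_add hx hw hy, hD.projW_add_add hx hw hy,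
    hD.projY_add_add hx hw hy]

lemma blockDiag_apply_of_mem_X {f : V →ₗ[E] V} (hf : MapsTo f X X) (hx : x ∈ X) :
    hD.blockDiag f x = f x := by
  simpa [hD.projX_apply_of_mem (hf hx)] using hD.blockDiag_add_add f hx W.zero_mem Y.zero_mem

lemma blockDiag_apply_of_mem_W (f : V →ₗ[E] V) (hw : w ∈ W) :
    hD.blockDiag f w = hD.projW (f w) := by
  simpa using hD.blockDiag_add_add f X.zero_mem hw Y.zero_mem

lemma blockDiag_apply_of_mem_Y (f : V →ₗ[E] V) (hy : y ∈ Y) :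
    hD.blockDiag f y = hD.projY (f y) := by
  simpa using hD.blockDiag_add_add f X.zero_mem W.zero_mem hy

variable {g : V ≃ₗ[E] V}

lemma projY_apply_projW_eq_zero (hsymm : q.IsSymm) (hnd : q.SeparatingLeft)
    (hg : q.IsOrthogonal g) (hgX' : MapsTo g.symm X X) (v : V) : hD.projY (g (hD.projW v)) = 0 :=
  hD.projY_eq_zero_of_orthogonal_X hsymm hnd fun x hx => by
    rw [← g.apply_symm_apply x, hg, hsymm.eq]; exact hD.ortho_XW _ (hgX' hx) _ (hD.projW_mem v)

lemma isOrthogonal_blockDiag (hsymm : q.IsSymm) (hnd : q.SeparatingLeft)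
    (hg : q.IsOrthogonal g) (hgX : MapsTo g X X) (hgX' : MapsTo g.symm X X) :
    q.IsOrthogonal (hD.blockDiag g) := by
  have hXY : ∀ a b, q (hD.projX (g (hD.projX a))) (hD.projY (g (hD.projY b))) =
      q (hD.projX a) (hD.projY b) := fun a b => by
    rw [hD.projX_apply_of_mem (hgX (hD.projX_mem a)),
      ← hD.apply_eq_apply_projY hsymm (hgX (hD.projX_mem a)), hg]
  have hWW : ∀ a b, q (hD.projW (g (hD.projW a))) (hD.projW (g (hD.projW b))) =
      q (hD.projW a) (hD.projW b) := fun a b => by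
    rw [← hD.apply_eq_apply_projW hsymm (hD.projY_apply_projW_eq_zero hsymm hnd hg hgX' a)
      (hD.projY_apply_projW_eq_zero hsymm hnd hg hgX' b), hg]
  -- only the `X × Y`, `W × W` and `Y × X` blocks of `q` are nonzero
  intro a b
  simp only [blockDiag_apply, LinearEquiv.coe_coe]
  rw [hD.apply_add_add hsymm (hD.projX_mem _) (hD.projW_mem _) (hD.projY_mem _)
    (hD.projX_mem _) (hD.projW_mem _) (hD.projY_mem _), hXY, hWW, hsymm.eq (hD.projY _), hXY,
    hD.apply_eq hsymm a b, hsymm.eq (hD.projY a)]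

lemma sub_blockDiag_mem (hsymm : q.IsSymm) (hnd : q.SeparatingLeft)
    (hg : q.IsOrthogonal g) (hgX : MapsTo g X X) (hgX' : MapsTo g.symm X X) {v : V}
    (hv : ∀ x ∈ X, q v x = 0) : g v - hD.blockDiag g v ∈ X := by
  have hYv := hD.projY_eq_zero_of_orthogonal_X hsymm hnd hv
  have hdecW := hD.projX_add_projW_add_projY (g (hD.projW v))
  have hdecv := hD.projX_add_projW_add_projY v
  rw [hD.projY_apply_projW_eq_zero hsymm hnd hg hgX' v, add_zero] at hdecW
  rw [hYv, add_zero] at hdecv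
  have key : g v - hD.blockDiag g v = hD.projX (g (hD.projW v)) := by
    rw [blockDiag_apply, hYv, map_zero, map_zero, add_zero, LinearEquiv.coe_coe,
      hD.projX_apply_of_mem (hgX (hD.projX_mem v))]
    nth_rewrite 1 [← hdecv]
    rw [map_add, add_sub_add_left_eq_sub]
    exact (eq_sub_of_add_eq hdecW).symm
  rw [key]; exact hD.projX_mem _

theorem exists_levi_mul_unipotent [FiniteDimensional E V] (hsymm : q.IsSymm)
    (hnd : q.SeparatingLeft) (hg : q.IsOrthogonal g) (hgX : MapsTo g X X)
    (hgX' : MapsTo g.symm X X) :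
    ∃ mg u : V ≃ₗ[E] V, q.IsOrthogonal mg ∧ q.IsOrthogonal u ∧ (∀ v, g v = mg (u v)) ∧
      (MapsTo mg X X ∧ MapsTo mg Y Y ∧ MapsTo mg W W ∧ ∀ w ∈ W, mg w = hD.projW (g w)) ∧
      (∀ x ∈ X, u x = x) ∧ ∀ w, (∀ x ∈ X, q w x = 0) → u w - w ∈ X := by
  have hm : q.IsOrthogonal (hD.blockDiag g) := hD.isOrthogonal_blockDiag hsymm hnd hg hgX hgX'
  set mg := LinearEquiv.ofInjectiveEndo _ (hm.injective hnd)
  have hmX : MapsTo mg X X := fun x (hx : x ∈ X) => by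
    rw [LinearEquiv.coe_ofInjectiveEndo, hD.blockDiag_apply_of_mem_X hgX hx]; exact hgX hx
  refine ⟨mg, g.trans mg.symm, hm, fun a b => (hm.symm _ _).trans (hg a b),
    fun v => (mg.apply_symm_apply _).symm,
    ⟨hmX, fun y (hy : y ∈ Y) => ?_, fun w (hw : w ∈ W) => ?_,
      fun w hw => hD.blockDiag_apply_of_mem_W _ hw⟩, fun x hx => ?_, fun w hw => ?_⟩
  · rw [LinearEquiv.coe_ofInjectiveEndo, hD.blockDiag_apply_of_mem_Y _ hy]; exact hD.projY_mem _
  · rw [LinearEquiv.coe_ofInjectiveEndo, hD.blockDiag_apply_of_mem_W _ hw]; exact hD.projW_mem _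
  · exact mg.symm_apply_eq.mpr (hD.blockDiag_apply_of_mem_X hgX hx).symm
  · have : mg.symm (g w) - w = mg.symm (g w - mg w) := by rw [map_sub, mg.symm_apply_apply]
    exact this ▸ mg.mapsTo_symm hmX (hD.sub_blockDiag_mem hsymm hnd hg hgX hgX' hw)

end IsWittDecomposition

end LinearMap.BilinForm

section TwistedSum

variable {F E V : Type*} [Field F] [Field E] [Algebra F E] [AddCommGroup V] [Module E V]
  [Module F V] [IsScalarTower F E V] {X : Submodule E V} {VF : Submodule F V} {τ : E}

/-- The paper's `L_k = X_k ⊕ τ V_{2m-2k,F}`, as an `F`-subspace of `V`. -/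
def twistedSum (X : Submodule E V) (VF : Submodule F V) (τ : E) : Submodule F V :=
  X.restrictScalars F ⊔ τ • VF

lemma mem_twistedSum {z : V} : z ∈ twistedSum X VF τ ↔ ∃ x ∈ X, ∃ v ∈ VF, z = x + τ • v := by
  simp only [twistedSum, Submodule.mem_sup, Submodule.restrictScalars_mem,
    Submodule.mem_smul_pointwise_iff_exists]
  grind

lemma setOf_eq_twistedSum (X : Submodule E V) (VF : Submodule F V) (τ : E) :
    {w : V | ∃ x ∈ X, ∃ v ∈ VF, w = x + τ • v} = twistedSum X VF τ :=
  Set.ext fun _ => mem_twistedSum.symm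

lemma smul_mem_twistedSum {v : V} (hv : v ∈ VF) : τ • v ∈ twistedSum X VF τ :=
  mem_twistedSum.mpr ⟨0, X.zero_mem, v, hv, (zero_add _).symm⟩

lemma mapsTo_twistedSum {f : V →ₗ[E] V} (hX : MapsTo f X X) (hVF : MapsTo f VF VF) :
    MapsTo f (twistedSum X VF τ) (twistedSum X VF τ) := by
  intro _ h
  obtain ⟨x, hx, v, hv, rfl⟩ := mem_twistedSum.mp h
  rw [map_add, map_smul]
  exact mem_twistedSum.mpr ⟨_, hX hx, _, hVF hv, rfl⟩

lemma mapsTo_twistedSum_of_levi [FiniteDimensional F V] {m : V ≃ₗ[E] V} (hX : MapsTo m X X)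
    (hVF : MapsTo m VF VF) :
    MapsTo m (twistedSum X VF τ) (twistedSum X VF τ) ∧
      MapsTo m.symm (twistedSum X VF τ) (twistedSum X VF τ) :=
  ⟨mapsTo_twistedSum hX hVF, mapsTo_twistedSum
    ((m.restrictScalars F).mapsTo_symm (p := X.restrictScalars F) hX)
    ((m.restrictScalars F).mapsTo_symm hVF)⟩

lemma mapsTo_twistedSum_of_unipotent {q : LinearMap.BilinForm E V} {u : V →ₗ[E] V}
    (huX : ∀ x ∈ X, u x = x) (huN : ∀ w, (∀ x ∈ X, q w x = 0) → u w - w ∈ X)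
    (hVF : ∀ v ∈ VF, ∀ x ∈ X, q v x = 0) :
    MapsTo u (twistedSum X VF τ) (twistedSum X VF τ) := by
  intro _ h
  obtain ⟨x, hx, v, hv, rfl⟩ := mem_twistedSum.mp h
  refine mem_twistedSum.mpr
    ⟨x + τ • (u v - v), X.add_mem hx (X.smul_mem τ (huN v (hVF v hv))), v, hv, ?_⟩
  rw [map_add, map_smul, huX x hx, smul_sub]
  abel

lemma mapsTo_twistedSum_of_unipotent_equiv {q : LinearMap.BilinForm E V} {u : V ≃ₗ[E] V}
    (hu : q.IsOrthogonal u) (huX : ∀ x ∈ X, u x = x)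
    (huN : ∀ w, (∀ x ∈ X, q w x = 0) → u w - w ∈ X) (hVF : ∀ v ∈ VF, ∀ x ∈ X, q v x = 0) :
    MapsTo u (twistedSum X VF τ) (twistedSum X VF τ) ∧
      MapsTo u.symm (twistedSum X VF τ) (twistedSum X VF τ) :=
  ⟨mapsTo_twistedSum_of_unipotent (u := u.toLinearMap) huX huN hVF,
    mapsTo_twistedSum_of_unipotent (u := u.symm.toLinearMap)
      (fun x hx => u.symm_apply_eq.mpr (huX x hx).symm)
      (fun _ hw => hu.symm_apply_sub_mem huX huN hw) hVF⟩

lemma LinearMap.BilinForm.IsWittDecomposition.projW_mem_of_smul_mem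
    {q : LinearMap.BilinForm E V} {W Y : Submodule E V} (hD : q.IsWittDecomposition X W Y)
    (hVF : (VF : Set V) ⊆ W) (hτ : τ ≠ 0) {z : V} (hz : τ • z ∈ twistedSum X VF τ) :
    hD.projW z ∈ VF := by
  obtain ⟨x, hx, v, hv, hxv⟩ := mem_twistedSum.mp hz
  have : z = τ⁻¹ • x + v + 0 := by
    rw [add_zero, ← inv_smul_smul₀ hτ z, hxv, smul_add, inv_smul_smul₀ hτ]
  rwa [this, hD.projW_add_add (X.smul_mem _ hx) (hVF hv) (zero_mem _)]

end TwistedSum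

theorem stmt12_general
    (F E V : Type*) [Field F] [Field E] [Algebra F E]
    (hquad : Module.finrank F E = 2)
    (τ : E) (hτ : τ ≠ 0)
    [AddCommGroup V] [Module E V] [Module F V] [IsScalarTower F E V]
    [FiniteDimensional E V]
    (q : LinearMap.BilinForm E V) (hsymm : q.IsSymm) (hnd : q.Nondegenerate)
    (Xk Yk : Submodule E V) (VF : Submodule F V)
    (hXkiso : ∀ x ∈ Xk, ∀ y ∈ Xk, q x y = 0)
    (hYkiso : ∀ x ∈ Yk, ∀ y ∈ Yk, q x y = 0)
    (horthX : ∀ x ∈ Xk, ∀ v ∈ VF, q x v = 0)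
    (horthY : ∀ y ∈ Yk, ∀ v ∈ VF, q y v = 0)
    (hdecomp : Xk ⊔ Submodule.span E (VF : Set V) ⊔ Yk = ⊤)
    (Lk : Set V)
    (hLk : Lk = {w : V | ∃ x ∈ Xk, ∃ v ∈ VF, w = x + τ • v})
    (hrad : {x : V | x ∈ Submodule.span F Lk ∧ ∀ y ∈ Lk, q x y = 0} = (Xk : Set V)) :
    ∀ g : V ≃ₗ[E] V, (∀ x y : V, q (g x) (g y) = q x y) →
      (((∀ x ∈ Submodule.span F Lk, g x ∈ Submodule.span F Lk) ∧
          (∀ x ∈ Submodule.span F Lk, g.symm x ∈ Submodule.span F Lk)) ↔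
        ∃ mg u : V ≃ₗ[E] V,
          (∀ x y : V, q (mg x) (mg y) = q x y) ∧ (∀ x y : V, q (u x) (u y) = q x y) ∧
          (∀ x : V, g x = mg (u x)) ∧
          -- mg lies in the Levi subgroup GL(X_k) × O(V_{2m-2k,F})
          ((∀ x ∈ Xk, mg x ∈ Xk) ∧ (∀ y ∈ Yk, mg y ∈ Yk) ∧
            (∀ w ∈ Submodule.span E (VF : Set V), mg w ∈ Submodule.span E (VF : Set V)) ∧
            (∀ v ∈ VF, mg v ∈ VF)) ∧
          -- u lies in the unipotent radical N of Stab_{O(V)}(X_k)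
          ((∀ x ∈ Xk, u x = x) ∧
            (∀ w : V, (∀ x ∈ Xk, q w x = 0) → u w - w ∈ Xk))) := by
  intro g (hg : q.IsOrthogonal g)
  have : FiniteDimensional F E := Module.finite_of_finrank_pos (by omega)
  have : FiniteDimensional F V := Module.Finite.trans E V
  have hD : q.IsWittDecomposition Xk (Submodule.span E VF) Yk :=
    .of_sup_eq_top hsymm hnd.1 hXkiso hYkiso
      (fun x hx => LinearMap.BilinForm.apply_eq_zero_of_mem_span (horthX x hx))
      (fun y hy => LinearMap.BilinForm.apply_eq_zero_of_mem_span (horthY y hy)) hdecomp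
  subst hLk
  rw [setOf_eq_twistedSum, Submodule.span_eq] at hrad ⊢
  constructor
  · rintro ⟨hgL, hgL'⟩
    have hgX : MapsTo g Xk Xk := hrad ▸ hg.mapsTo_radical hgL hgL'
    have hgX' : MapsTo g.symm Xk Xk := hrad ▸ hg.symm.mapsTo_radical hgL' hgL
    obtain ⟨mg, u, hmg, hu, hgmu, ⟨hmX, hmY, hmW, hmW_eq⟩, hN⟩ :=
      hD.exists_levi_mul_unipotent hsymm hnd.1 hg hgX hgX'
    refine ⟨mg, u, hmg, hu, hgmu, ⟨hmX, hmY, hmW, fun v hv => ?_⟩, hN⟩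
    rw [hmW_eq v (Submodule.subset_span hv)]
    exact hD.projW_mem_of_smul_mem Submodule.subset_span hτ
      (map_smul g τ v ▸ hgL _ (smul_mem_twistedSum hv))
  · rintro ⟨mg, u, -, (hu : q.IsOrthogonal u), hgmu, ⟨hmX, -, -, hmVF⟩, huX, huN⟩
    obtain rfl : g = u.trans mg := LinearEquiv.ext hgmu
    have hVFX : ∀ v ∈ VF, ∀ x ∈ Xk, q v x = 0 := fun v hv x hx => by
      rw [hsymm.eq]; exact horthX x hx v hv
    obtain ⟨hmL, hmL'⟩ := mapsTo_twistedSum_of_levi (τ := τ) hmX hmVF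
    obtain ⟨huL, huL'⟩ := mapsTo_twistedSum_of_unipotent_equiv (τ := τ) hu huX huN hVFX
    exact ⟨hmL.comp huL, huL'.comp hmL'⟩

/-- For the quadratic `E`-space `V` of dimension `2m` with isotropic
`E`-subspace `X_k` (with dual isotropic `Y_k`) and rational subspace `V_{2m−2k,F}`, the
stabilizer in `O(V)` of the Lagrangian `L_k = X_k ⊕ τ V_{2m−2k,F}` of `𝐕_τ` equals
`(GL(X_k) × O(V_{2m−2k,F})) ⋉ N`: an isometry `g` of `V` stabilizes `L_k` iff `g = m·u`
with `u` in the unipotent radical `N` of `Stab_{O(V)}(X_k)` and `m` a Levi element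
stabilizing `X_k`, `Y_k`, `V_{2m−2k} = E·V_{2m−2k,F}` and the rational form
`V_{2m−2k,F}`. -/
theorem stmt12
    (F E V : Type*) [Field F] [Field E] [Algebra F E] [CharZero F]
    (hquad : Module.finrank F E = 2)
    (τ : E) (hτ : τ ≠ 0) (htr : Algebra.trace F E τ = 0)
    [AddCommGroup V] [Module E V] [Module F V] [IsScalarTower F E V]
    [FiniteDimensional E V] (m k : ℕ) (hdV : Module.finrank E V = 2 * m)
    (q : LinearMap.BilinForm E V) (hsymm : q.IsSymm) (hnd : q.Nondegenerate)
    (Xk Yk : Submodule E V) (VF : Submodule F V)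
    (hXkiso : ∀ x ∈ Xk, ∀ y ∈ Xk, q x y = 0)
    (hYkiso : ∀ x ∈ Yk, ∀ y ∈ Yk, q x y = 0)
    (hdXk : Module.finrank E Xk = k) (hdYk : Module.finrank E Yk = k)
    (horthX : ∀ x ∈ Xk, ∀ v ∈ VF, q x v = 0)
    (horthY : ∀ y ∈ Yk, ∀ v ∈ VF, q y v = 0)
    (hdecomp : Xk ⊔ Submodule.span E (VF : Set V) ⊔ Yk = ⊤)
    (Lk : Set V)
    (hLk : Lk = {w : V | ∃ x ∈ Xk, ∃ v ∈ VF, w = x + τ • v})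
    (hlag₁ : ∀ x ∈ Lk, ∀ y ∈ Lk, Algebra.trace F E (τ * q x y) = 0)
    (hlag₂ : 2 * Module.finrank F (Submodule.span F Lk) = Module.finrank F V)
    (hrad : {x : V | x ∈ Submodule.span F Lk ∧ ∀ y ∈ Lk, q x y = 0} = (Xk : Set V)) :
    ∀ g : V ≃ₗ[E] V, (∀ x y : V, q (g x) (g y) = q x y) →
      (((∀ x ∈ Submodule.span F Lk, g x ∈ Submodule.span F Lk) ∧
          (∀ x ∈ Submodule.span F Lk, g.symm x ∈ Submodule.span F Lk)) ↔
        ∃ mg u : V ≃ₗ[E] V,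
          (∀ x y : V, q (mg x) (mg y) = q x y) ∧ (∀ x y : V, q (u x) (u y) = q x y) ∧
          (∀ x : V, g x = mg (u x)) ∧
          -- mg lies in the Levi subgroup GL(X_k) × O(V_{2m-2k,F})
          ((∀ x ∈ Xk, mg x ∈ Xk) ∧ (∀ y ∈ Yk, mg y ∈ Yk) ∧
            (∀ w ∈ Submodule.span E (VF : Set V), mg w ∈ Submodule.span E (VF : Set V)) ∧
            (∀ v ∈ VF, mg v ∈ VF)) ∧
          -- u lies in the unipotent radical N of Stab_{O(V)}(X_k)
          ((∀ x ∈ Xk, u x = x) ∧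
            (∀ w : V, (∀ x ∈ Xk, q w x = 0) → u w - w ∈ Xk))) :=
  stmt12_general F E V hquad τ hτ q hsymm hnd Xk Yk VF hXkiso hYkiso horthX horthY hdecomp Lk hLk
    hrad
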